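/- arXiv:2008.05823 — 3 statements merged into one kernel-verified Lean document; each statement's English description precedes it below -/
import Mathlib

section
/- For all δ with 0 < δ < 1, all L > 0, M ≥ 0, σ ≥ 0 with M² + σ² > 0, and all η with 0 < η < 3/(2L), the SAEF-SGD compression-error term (2 + 8C_δ/(3 − 2ηL)) · (1−δ)/(1−√(1−δ))² · η²L²(M² + σ²) is strictly smaller than the EF-SGD compression-error term 32L²(1−δ)(M² + σ²)/δ² · (1 + 16/δ²) · η²/(3 − 2ηL). -/
/-! Both sides share the positive factor `(1 - δ) η² L² (M² + σ²) / (3 - 2ηL)`. After bounding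
`3 - 2ηL` by `3`, substituting `s = √(1 - δ)` (so `δ = (1 - s)(1 + s)`) and clearing `δ⁴`, what is
left is a polynomial inequality in `s ∈ [0, 1)` whose gap is `(1 - s) Q(s)`, with
`Q(s) ≥ 490 - 420 > 0` on `[0, 1]`. The gap closes as `δ → 0`. -/

lemma error_term_poly_lt {s : ℝ} (hs0 : 0 ≤ s) (hs1 : s < 1) :
    6 * (1 - s) ^ 2 * (1 + s) ^ 4 + 16 * (2 - s ^ 2) * (1 + s ^ 2) * (1 + s) ^ 4
        + 8 * (2 - s ^ 2) * (1 - s) * (1 + s) ^ 3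
      < 32 * (1 - s ^ 2) ^ 2 + 512 := by
  have hQ : 0 < 490 + 318 * s + 60 * s ^ 2 - 60 * s ^ 3 - 118 * s ^ 4 - 146 * s ^ 5
      - 80 * s ^ 6 - 16 * s ^ 7 := by
    have h3 : s ^ 3 ≤ 1 := pow_le_one₀ hs0 hs1.le
    have h4 : s ^ 4 ≤ 1 := pow_le_one₀ hs0 hs1.le
    have h5 : s ^ 5 ≤ 1 := pow_le_one₀ hs0 hs1.le
    have h6 : s ^ 6 ≤ 1 := pow_le_one₀ hs0 hs1.le
    have h7 : s ^ 7 ≤ 1 := pow_le_one₀ hs0 hs1.le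
    nlinarith [sq_nonneg s]
  linear_combination mul_pos (sub_pos.mpr hs1) hQ

lemma saef_coeff_lt_ef_coeff {δ D : ℝ} (hδ0 : 0 < δ) (hδ1 : δ < 1) (hD : D ≤ 3) :
    (2 * D + 8 * (2 * (1 + δ) * (2 - δ) / (1 - Real.sqrt (1 - δ)) ^ 2 + (1 + δ) / δ))
        / (1 - Real.sqrt (1 - δ)) ^ 2
      < 32 / δ ^ 2 * (1 + 16 / δ ^ 2) := by
  set s := Real.sqrt (1 - δ)
  have hs2 : s ^ 2 = 1 - δ := Real.sq_sqrt (by linarith)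
  have hs0 : 0 ≤ s := Real.sqrt_nonneg _
  have hs1 : s < 1 := by nlinarith
  have hδs : δ = (1 - s) * (1 + s) := by linear_combination hs2
  have h1s : 0 < 1 - s := sub_pos.mpr hs1
  have h1s' : 0 < 1 + s := by linarith
  rw [hδs, div_lt_iff₀ (by positivity)]
  field_simp
  nlinarith [error_term_poly_lt hs0 hs1, mul_le_mul_of_nonneg_right hD
    (by positivity : (0 : ℝ) ≤ 2 * (1 - s) ^ 2 * (1 + s) ^ 4)]

theorem saef_error_term_lt_ef_error_term_general
    (δ L M σ η : ℝ) (hδ0 : 0 < δ) (hδ1 : δ < 1)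
    (hL : 0 < L) (hMσ : 0 < M ^ 2 + σ ^ 2)
    (hη0 : 0 < η) (hη : η < 3 / (2 * L)) :
    (2 + 8 * (2 * (1 + δ) * (2 - δ) / (1 - Real.sqrt (1 - δ)) ^ 2 + (1 + δ) / δ)
          / (3 - 2 * η * L))
        * ((1 - δ) / (1 - Real.sqrt (1 - δ)) ^ 2)
        * (η ^ 2 * L ^ 2 * (M ^ 2 + σ ^ 2))
      < 32 * L ^ 2 * (1 - δ) * (M ^ 2 + σ ^ 2) / δ ^ 2 * (1 + 16 / δ ^ 2)
          * (η ^ 2 / (3 - 2 * η * L)) := by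
  set D := 3 - 2 * η * L
  set C := 2 * (1 + δ) * (2 - δ) / (1 - Real.sqrt (1 - δ)) ^ 2 + (1 + δ) / δ
  have hD0 : 0 < D := by
    have := (lt_div_iff₀ (by positivity : (0 : ℝ) < 2 * L)).mp hη
    linarith
  have hD3 : D ≤ 3 := by linarith [mul_pos hη0 hL]
  have hsqrt : 1 - Real.sqrt (1 - δ) ≠ 0 :=
    (sub_pos.mpr ((Real.sqrt_lt' one_pos).mpr (by linarith))).ne'
  have hcommon : 0 < (1 - δ) * (η ^ 2 * L ^ 2 * (M ^ 2 + σ ^ 2)) / D := by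
    have : 0 < 1 - δ := by linarith
    positivity
  calc _ = (2 * D + 8 * C) / (1 - Real.sqrt (1 - δ)) ^ 2
          * ((1 - δ) * (η ^ 2 * L ^ 2 * (M ^ 2 + σ ^ 2)) / D) := by
        field_simp
    _ < 32 / δ ^ 2 * (1 + 16 / δ ^ 2) * ((1 - δ) * (η ^ 2 * L ^ 2 * (M ^ 2 + σ ^ 2)) / D) :=
        mul_lt_mul_of_pos_right (saef_coeff_lt_ef_coeff hδ0 hδ1 hD3) hcommon
    _ = _ := by
        field_simp

/-- The SAEF-SGD compression-error term is strictly smaller than the EF-SGD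
compression-error term, for all `0 < δ < 1`, `L > 0`, `M ≥ 0`, `σ ≥ 0` with
`M² + σ² > 0`, and all `0 < η < 3/(2L)`.  Here
`C_δ = 2(1+δ)(2−δ)/(1−√(1−δ))² + (1+δ)/δ`. -/
theorem saef_error_term_lt_ef_error_term
    (δ L M σ η : ℝ) (hδ0 : 0 < δ) (hδ1 : δ < 1)
    (hL : 0 < L) (hM : 0 ≤ M) (hσ : 0 ≤ σ) (hMσ : 0 < M ^ 2 + σ ^ 2)
    (hη0 : 0 < η) (hη : η < 3 / (2 * L)) :
    (2 + 8 * (2 * (1 + δ) * (2 - δ) / (1 - Real.sqrt (1 - δ)) ^ 2 + (1 + δ) / δ)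
          / (3 - 2 * η * L))
        * ((1 - δ) / (1 - Real.sqrt (1 - δ)) ^ 2)
        * (η ^ 2 * L ^ 2 * (M ^ 2 + σ ^ 2))
      < 32 * L ^ 2 * (1 - δ) * (M ^ 2 + σ ^ 2) / δ ^ 2 * (1 + 16 / δ ^ 2)
          * (η ^ 2 / (3 - 2 * η * L)) :=
  saef_error_term_lt_ef_error_term_general δ L M σ η hδ0 hδ1 hL hMσ hη0 hη
end

section
/- Let e¹, …, e^K (K ≥ 1) be square-integrable, mutually independent ℝ^d-valued random vectors with a common mean m = E[e^k], and suppose Var(e^k) := E‖e^k − m‖² ≤ ‖m‖² for every k. Then (1/K)Σ_{k=1}^K E‖(1/K)Σ_{j=1}^K e^j − e^k‖² ≤ E‖(1/K)Σ_{j=1}^K e^j‖². Consequently, for any square-integrable ℝ^d-valued random vector e, the SAEF mismatch upper bound 2E‖e‖² + (2(K−1)/K²)Σ_k Var(e^k) is no larger than the EF mismatch upper bound 2E‖e‖² + 2E‖(1/K)Σ_j e^j‖². -/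
/-!
Embed the errors in the Hilbert space `L²(P; ℝ^d)` and let `v` be the constant `m` there. By
independence and the common mean, the centred errors `e^k - v` are pairwise orthogonal and
orthogonal to `v`, so with `S = Σ_k Var(e^k)` Pythagoras gives
`E‖ē‖² = S / K² + ‖m‖²` and `(1/K) Σ_k E‖ē - e^k‖² = (K - 1) S / K²` for the mean `ē`.
The variance hypothesis gives `S ≤ K ‖m‖²`, hence `(K - 1) S / K² ≤ S / K ≤ ‖m‖²`.
-/

open MeasureTheory ProbabilityTheory

theorem sub_one_div_sq_mul_le_div_sq_add {n S M : ℝ} (hn : 1 ≤ n) (hS : 0 ≤ S) (hSM : S ≤ n * M) :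
    (n - 1) / n ^ 2 * S ≤ S / n ^ 2 + M := by
  have hn2 : 0 < n ^ 2 := by positivity
  rw [div_mul_eq_mul_div, div_add' _ _ _ hn2.ne', div_le_div_iff_of_pos_right hn2]
  nlinarith

namespace MeasureTheory

variable {α E : Type*} [MeasurableSpace α] {μ : Measure α} [NormedAddCommGroup E]

theorem MemLp.toLp_finsetSum {p : ENNReal} {ι : Type*} (s : Finset ι) {f : ι → α → E}
    (hf : ∀ i, MemLp (f i) p μ) :
    (memLp_finsetSum s fun i _ => hf i).toLp (fun a => ∑ i ∈ s, f i a)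
      = ∑ i ∈ s, (hf i).toLp (f i) := by
  classical
  induction s using Finset.induction_on with
  | empty => exact MemLp.toLp_zero _
  | insert i s hi ih =>
    simp_rw [Finset.sum_insert hi, ← ih]
    exact (hf i).toLp_add _

theorem MemLp.toLp_const_smul_finsetSum {p : ENNReal} {𝕜 : Type*} [NormedRing 𝕜] [Module 𝕜 E]
    [IsBoundedSMul 𝕜 E] {ι : Type*} (s : Finset ι) (c : 𝕜) {f : ι → α → E}
    (hf : ∀ i, MemLp (f i) p μ) :
    ((memLp_finsetSum s fun i _ => hf i).const_smul c).toLp (fun a => c • ∑ i ∈ s, f i a)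
      = c • ∑ i ∈ s, (hf i).toLp (f i) := by
  rw [← MemLp.toLp_finsetSum, ← MemLp.toLp_const_smul]
  rfl

theorem MemLp.toLp_sub_const {p : ENNReal} [IsFiniteMeasure μ] {f : α → E} (hf : MemLp f p μ)
    (m : E) : hf.toLp f - Lp.const p μ m = (hf.sub (memLp_const m)).toLp (fun a => f a - m) :=
  (hf.toLp_sub (memLp_const m)).symm

variable [InnerProductSpace ℝ E]

theorem MemLp.inner_toLp_toLp {f g : α → E} (hf : MemLp f 2 μ) (hg : MemLp g 2 μ) :
    inner ℝ (hf.toLp f) (hg.toLp g) = ∫ a, inner ℝ (f a) (g a) ∂μ := by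
  rw [L2.inner_def]
  refine integral_congr_ae ?_
  filter_upwards [hf.coeFn_toLp, hg.coeFn_toLp] with a hfa hga
  rw [hfa, hga]

theorem MemLp.norm_toLp_sq {f : α → E} (hf : MemLp f 2 μ) :
    ‖hf.toLp f‖ ^ 2 = ∫ a, ‖f a‖ ^ 2 ∂μ := by
  simp_rw [← real_inner_self_eq_norm_sq]
  exact hf.inner_toLp_toLp hf

end MeasureTheory

namespace ProbabilityTheory

theorem IndepFun.integral_inner {Ω E : Type*} [MeasurableSpace Ω] {μ : Measure Ω}
    [NormedAddCommGroup E] [InnerProductSpace ℝ E] [CompleteSpace E] [MeasurableSpace E]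
    [BorelSpace E] {X Y : Ω → E} (hXY : IndepFun X Y μ) (hX : Integrable X μ)
    (hY : Integrable Y μ) :
    ∫ ω, inner ℝ (X ω) (Y ω) ∂μ = inner ℝ (∫ ω, X ω ∂μ) (∫ ω, Y ω ∂μ) :=
  hXY.integral_bilin hX hY (innerSL ℝ)

end ProbabilityTheory

section InnerProductSpace

variable {H : Type*} [NormedAddCommGroup H] [InnerProductSpace ℝ H]

theorem norm_sum_sq_eq_sum_norm_sq_of_pairwise_inner_eq_zero {ι : Type*} (s : Finset ι)
    {u : ι → H} (hu : Pairwise fun i j => inner ℝ (u i) (u j) = 0) :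
    ‖∑ i ∈ s, u i‖ ^ 2 = ∑ i ∈ s, ‖u i‖ ^ 2 := by
  classical
  rw [← real_inner_self_eq_norm_sq, sum_inner]
  refine Finset.sum_congr rfl fun i hi => ?_
  rw [inner_sum, Finset.sum_eq_single i (fun j _ hji => hu hji.symm) (fun h => (h hi).elim),
    real_inner_self_eq_norm_sq]

variable {ι : Type*} [Fintype ι]

theorem sum_norm_sq_mean_sub_eq (u : ι → H) :
    ∑ k, ‖(Fintype.card ι : ℝ)⁻¹ • ∑ j, u j - u k‖ ^ 2
      = ∑ k, ‖u k‖ ^ 2 - (Fintype.card ι : ℝ)⁻¹ * ‖∑ j, u j‖ ^ 2 := by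
  set n : ℝ := (Fintype.card ι : ℝ)
  have hn : n * n⁻¹ ^ 2 = n⁻¹ := by
    rcases eq_or_ne n 0 with h | h
    · simp [h]
    · field_simp
  simp_rw [norm_sub_sq_real, Finset.sum_add_distrib, Finset.sum_sub_distrib, ← Finset.mul_sum,
    ← inner_sum, Finset.sum_const, Finset.card_univ, nsmul_eq_mul, norm_smul, real_inner_smul_left,
    real_inner_self_eq_norm_sq, mul_pow, Real.norm_eq_abs, sq_abs]
  linear_combination (‖∑ j, u j‖ ^ 2) * hn

theorem mean_eq_mean_sub_add [Nonempty ι] (x : ι → H) (v : H) :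
    (Fintype.card ι : ℝ)⁻¹ • ∑ j, x j = (Fintype.card ι : ℝ)⁻¹ • ∑ j, (x j - v) + v := by
  have hn : (Fintype.card ι : ℝ) ≠ 0 := by positivity
  rw [Finset.sum_sub_distrib, smul_sub, Finset.sum_const, Finset.card_univ,
    ← Nat.cast_smul_eq_nsmul ℝ, smul_smul, inv_mul_cancel₀ hn, one_smul, sub_add_cancel]

variable [Nonempty ι] {x : ι → H} {v : H}

theorem norm_sq_mean_eq_of_pairwise_inner_eq_zero
    (hx : Pairwise fun i j => inner ℝ (x i - v) (x j - v) = 0)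
    (hv : ∀ i, inner ℝ v (x i - v) = 0) :
    ‖(Fintype.card ι : ℝ)⁻¹ • ∑ j, x j‖ ^ 2
      = (∑ j, ‖x j - v‖ ^ 2) / (Fintype.card ι : ℝ) ^ 2 + ‖v‖ ^ 2 := by
  have horth : inner ℝ ((Fintype.card ι : ℝ)⁻¹ • ∑ j, (x j - v)) v = 0 := by
    rw [real_inner_comm, real_inner_smul_right, inner_sum, Finset.sum_eq_zero fun i _ => hv i,
      mul_zero]
  rw [mean_eq_mean_sub_add x v, norm_add_sq_real, horth, norm_smul,
    mul_pow, norm_sum_sq_eq_sum_norm_sq_of_pairwise_inner_eq_zero _ hx]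
  simp [div_eq_inv_mul]

theorem inv_mul_sum_norm_sq_mean_sub_eq_of_pairwise_inner_eq_zero
    (hx : Pairwise fun i j => inner ℝ (x i - v) (x j - v) = 0) :
    (Fintype.card ι : ℝ)⁻¹ * ∑ k, ‖(Fintype.card ι : ℝ)⁻¹ • ∑ j, x j - x k‖ ^ 2
      = ((Fintype.card ι : ℝ) - 1) / (Fintype.card ι : ℝ) ^ 2 * ∑ j, ‖x j - v‖ ^ 2 := by
  have hn : (Fintype.card ι : ℝ) ≠ 0 := by positivity
  have hshift : ∀ k, (Fintype.card ι : ℝ)⁻¹ • ∑ j, x j - x k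
      = (Fintype.card ι : ℝ)⁻¹ • ∑ j, (x j - v) - (x k - v) := fun k => by
    rw [mean_eq_mean_sub_add x v]; abel
  simp_rw [hshift]
  rw [sum_norm_sq_mean_sub_eq, norm_sum_sq_eq_sum_norm_sq_of_pairwise_inner_eq_zero _ hx]
  field_simp

end InnerProductSpace

section Mismatch

variable {Ω E : Type*} [MeasurableSpace Ω] {μ : Measure Ω} [IsProbabilityMeasure μ]
  [NormedAddCommGroup E] [InnerProductSpace ℝ E] [CompleteSpace E] {X Y : Ω → E} {a b : E}

theorem integral_sub_eq_zero_of_integral_eq (hX : Integrable X μ) (ha : ∫ ω, X ω ∂μ = a) :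
    ∫ ω, (X ω - a) ∂μ = 0 := by
  rw [integral_sub hX (integrable_const a), ha, integral_const, probReal_univ, one_smul, sub_self]

theorem inner_const_toLp_sub_const_eq_zero (hX : MemLp X 2 μ) (ha : ∫ ω, X ω ∂μ = a) :
    inner ℝ (Lp.const 2 μ a) (hX.toLp X - Lp.const 2 μ a) = 0 := by
  rw [hX.toLp_sub_const, ← MemLp.toLp_const, MemLp.inner_toLp_toLp,
    integral_inner (f := fun ω => X ω - a) ((hX.sub (memLp_const a)).integrable one_le_two),
    integral_sub_eq_zero_of_integral_eq (hX.integrable one_le_two) ha, inner_zero_right]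

theorem inner_toLp_sub_const_eq_zero_of_indepFun [MeasurableSpace E] [BorelSpace E]
    (hXY : IndepFun X Y μ) (hX : MemLp X 2 μ) (hY : MemLp Y 2 μ) (ha : ∫ ω, X ω ∂μ = a) :
    inner ℝ (hX.toLp X - Lp.const 2 μ a) (hY.toLp Y - Lp.const 2 μ b) = 0 := by
  rw [hX.toLp_sub_const, hY.toLp_sub_const, MemLp.inner_toLp_toLp,
    IndepFun.integral_inner (X := fun ω => X ω - a) (Y := fun ω => Y ω - b) _
      ((hX.sub (memLp_const a)).integrable one_le_two)
      ((hY.sub (memLp_const b)).integrable one_le_two),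
    integral_sub_eq_zero_of_integral_eq (hX.integrable one_le_two) ha, inner_zero_left]
  exact hXY.comp (measurable_id.sub_const a) (measurable_id.sub_const b)

variable [MeasurableSpace E] [BorelSpace E] {ι : Type*} [Fintype ι] [Nonempty ι]
  {e : ι → Ω → E} {m : E}

theorem integral_norm_sq_mean_eq (hL2 : ∀ k, MemLp (e k) 2 μ)
    (hindep : Pairwise fun j k => IndepFun (e j) (e k) μ) (hmean : ∀ k, ∫ ω, e k ω ∂μ = m) :
    ∫ ω, ‖(Fintype.card ι : ℝ)⁻¹ • ∑ j, e j ω‖ ^ 2 ∂μ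
      = (∑ k, ∫ ω, ‖e k ω - m‖ ^ 2 ∂μ) / (Fintype.card ι : ℝ) ^ 2 + ‖m‖ ^ 2 := by
  have h := norm_sq_mean_eq_of_pairwise_inner_eq_zero
    (fun j k hjk => inner_toLp_sub_const_eq_zero_of_indepFun (hindep hjk) (hL2 j) (hL2 k)
      (hmean j))
    (fun k => inner_const_toLp_sub_const_eq_zero (hL2 k) (hmean k))
  rw [← MemLp.toLp_const_smul_finsetSum, MemLp.norm_toLp_sq] at h
  simp_rw [MemLp.toLp_sub_const, MemLp.norm_toLp_sq, ← MemLp.toLp_const, MemLp.norm_toLp_sq,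
    integral_const, probReal_univ, one_smul] at h
  exact h

theorem inv_mul_sum_integral_norm_sq_mean_sub_eq (hL2 : ∀ k, MemLp (e k) 2 μ)
    (hindep : Pairwise fun j k => IndepFun (e j) (e k) μ) (hmean : ∀ k, ∫ ω, e k ω ∂μ = m) :
    (Fintype.card ι : ℝ)⁻¹ * ∑ k, ∫ ω, ‖(Fintype.card ι : ℝ)⁻¹ • ∑ j, e j ω - e k ω‖ ^ 2 ∂μ
      = ((Fintype.card ι : ℝ) - 1) / (Fintype.card ι : ℝ) ^ 2
          * ∑ k, ∫ ω, ‖e k ω - m‖ ^ 2 ∂μ := by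
  have h := inv_mul_sum_norm_sq_mean_sub_eq_of_pairwise_inner_eq_zero
    (fun j k hjk => inner_toLp_sub_const_eq_zero_of_indepFun (hindep hjk) (hL2 j) (hL2 k)
      (hmean j))
  simp_rw [← MemLp.toLp_const_smul_finsetSum, ← MemLp.toLp_sub, MemLp.toLp_sub_const,
    MemLp.norm_toLp_sq] at h
  exact h

end Mismatch

theorem saef_mismatch_bound_le_ef_mismatch_bound_general
    {Ω : Type*} [MeasurableSpace Ω] (P : Measure Ω) [IsProbabilityMeasure P]
    {d K : ℕ} (hK : 1 ≤ K)
    (e : Fin K → Ω → EuclideanSpace ℝ (Fin d))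
    (hL2 : ∀ k, MemLp (e k) 2 P)
    (hindep : iIndepFun e P)
    (m : EuclideanSpace ℝ (Fin d)) (hmean : ∀ k, ∫ ω, e k ω ∂P = m)
    (hvar : ∀ k, ∫ ω, ‖e k ω - m‖ ^ 2 ∂P ≤ ‖m‖ ^ 2) :
    ((K : ℝ)⁻¹ * ∑ k, ∫ ω, ‖(K : ℝ)⁻¹ • (∑ j, e j ω) - e k ω‖ ^ 2 ∂P
        ≤ ∫ ω, ‖(K : ℝ)⁻¹ • (∑ j, e j ω)‖ ^ 2 ∂P)
    ∧ ∀ (eserver : Ω → EuclideanSpace ℝ (Fin d)), MemLp eserver 2 P →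
        2 * (∫ ω, ‖eserver ω‖ ^ 2 ∂P)
            + (2 * ((K : ℝ) - 1) / (K : ℝ) ^ 2) * ∑ k, ∫ ω, ‖e k ω - m‖ ^ 2 ∂P
          ≤ 2 * (∫ ω, ‖eserver ω‖ ^ 2 ∂P)
            + 2 * ∫ ω, ‖(K : ℝ)⁻¹ • (∑ j, e j ω)‖ ^ 2 ∂P := by
  have : Nonempty (Fin K) := ⟨⟨0, hK⟩⟩
  have hpair : Pairwise fun j k => IndepFun (e j) (e k) P := fun _ _ => hindep.indepFun
  have hEF := integral_norm_sq_mean_eq hL2 hpair hmean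
  have hSAEF := inv_mul_sum_integral_norm_sq_mean_sub_eq hL2 hpair hmean
  simp only [Fintype.card_fin] at hEF hSAEF
  have key := sub_one_div_sq_mul_le_div_sq_add (n := (K : ℝ)) (M := ‖m‖ ^ 2)
    (by exact_mod_cast hK)
    (Finset.sum_nonneg fun k _ => integral_nonneg fun ω => sq_nonneg ‖e k ω - m‖)
    (by simpa using Finset.sum_le_sum fun k (_ : k ∈ Finset.univ) => hvar k)
  rw [hEF, hSAEF]
  refine ⟨key, fun _ _ => ?_⟩
  rw [mul_div_assoc, mul_assoc]
  linarith

/-- Proposition 1: for square-integrable, mutually independent `ℝ^d`-valued random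
vectors `e¹, …, e^K` with common mean `m` and `Var(e^k) ≤ ‖m‖²`, we have
`(1/K)Σ_k E‖(1/K)Σ_j e^j − e^k‖² ≤ E‖(1/K)Σ_j e^j‖²`; consequently, for any
square-integrable random vector `e`, the SAEF mismatch upper bound
`2E‖e‖² + (2(K−1)/K²)Σ_k Var(e^k)` is at most the EF mismatch upper bound
`2E‖e‖² + 2E‖(1/K)Σ_j e^j‖²`. -/
theorem saef_mismatch_bound_le_ef_mismatch_bound
    {Ω : Type*} [MeasurableSpace Ω] (P : Measure Ω) [IsProbabilityMeasure P]
    {d K : ℕ} (hK : 1 ≤ K)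
    (e : Fin K → Ω → EuclideanSpace ℝ (Fin d))
    (hmeas : ∀ k, Measurable (e k))
    (hL2 : ∀ k, MemLp (e k) 2 P)
    (hindep : iIndepFun e P)
    (m : EuclideanSpace ℝ (Fin d)) (hmean : ∀ k, ∫ ω, e k ω ∂P = m)
    (hvar : ∀ k, ∫ ω, ‖e k ω - m‖ ^ 2 ∂P ≤ ‖m‖ ^ 2) :
    ((K : ℝ)⁻¹ * ∑ k, ∫ ω, ‖(K : ℝ)⁻¹ • (∑ j, e j ω) - e k ω‖ ^ 2 ∂P
        ≤ ∫ ω, ‖(K : ℝ)⁻¹ • (∑ j, e j ω)‖ ^ 2 ∂P)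
    ∧ ∀ (eserver : Ω → EuclideanSpace ℝ (Fin d)), MemLp eserver 2 P →
        2 * (∫ ω, ‖eserver ω‖ ^ 2 ∂P)
            + (2 * ((K : ℝ) - 1) / (K : ℝ) ^ 2) * ∑ k, ∫ ω, ‖e k ω - m‖ ^ 2 ∂P
          ≤ 2 * (∫ ω, ‖eserver ω‖ ^ 2 ∂P)
            + 2 * ∫ ω, ‖(K : ℝ)⁻¹ • (∑ j, e j ω)‖ ^ 2 ∂P :=
  saef_mismatch_bound_le_ef_mismatch_bound_general P hK e hL2 hindep m hmean hvar
end

section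
/- Under the SAEF-SGD-with-momentum dynamics with learning rates 0 < η_t ≤ η_max, for every β₁ with 0 < β₁ < δ/(1−δ) and every t ≥ 0: E‖e^k_{t+1}‖² ≤ [(1−δ)(1 + 1/β₁)/(1 − (1−δ)(1+β₁))] · η_max²(M² + σ²)/(1−μ)². In particular, taking β₁ = 1/√(1−δ) − 1 gives E‖e^k_{t+1}‖² ≤ (1−δ)/(1−√(1−δ))² · η_max²(M² + σ²)/(1−μ)². -/
/-!
Young's inequality with parameter `β` turns the contraction property of the compressor into the
one-step bound `‖e_{t+1}‖² ≤ (1-δ)(1+β)‖e_t‖² + (1-δ)(1+1/β) η_t² ‖m_{t+1}‖²`, and convexity of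
`‖·‖²` gives `‖m_{t+1}‖² ≤ μ‖m_t‖² + ‖g_t‖²/(1-μ)`. Both are recursions `x_{t+1} ≤ ρ x_t + v_t`
started at `0` with `ρ < 1` and `E v_t ≤ b`, so `E x_t ≤ b/(1-ρ)` for all `t`: first for the
momentum, then, with `b = (1-δ)(1+1/β) η_max² (M²+σ²)/(1-μ)²`, for the error.
-/

open MeasureTheory

section Young

variable {E : Type*} [SeminormedAddCommGroup E]

theorem norm_add_sq_le_young (a b : E) {β : ℝ} (hβ : 0 < β) :
    ‖a + b‖ ^ 2 ≤ (1 + β) * ‖a‖ ^ 2 + (1 + 1 / β) * ‖b‖ ^ 2 := by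
  have gap : (1 + β) * ‖a‖ ^ 2 + (1 + 1 / β) * ‖b‖ ^ 2 - (‖a‖ + ‖b‖) ^ 2
      = (β * ‖a‖ - ‖b‖) ^ 2 / β := by
    field_simp
    ring
  calc ‖a + b‖ ^ 2 ≤ (‖a‖ + ‖b‖) ^ 2 := by gcongr; exact norm_add_le a b
    _ ≤ _ := by nlinarith [div_nonneg (sq_nonneg (β * ‖a‖ - ‖b‖)) hβ.le]

theorem norm_smul_add_sq_le [NormedSpace ℝ E] (a b : E) {μ : ℝ} (hμ0 : 0 ≤ μ) (hμ1 : μ < 1) :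
    ‖μ • a + b‖ ^ 2 ≤ μ * ‖a‖ ^ 2 + ‖b‖ ^ 2 / (1 - μ) := by
  have hμ : 0 < 1 - μ := by linarith
  have gap : μ * ‖a‖ ^ 2 + ‖b‖ ^ 2 / (1 - μ) - (μ * ‖a‖ + ‖b‖) ^ 2
      = μ * ((1 - μ) * ‖a‖ - ‖b‖) ^ 2 / (1 - μ) := by
    field_simp
    ring
  calc ‖μ • a + b‖ ^ 2 ≤ (μ * ‖a‖ + ‖b‖) ^ 2 := by
        gcongr
        calc ‖μ • a + b‖ ≤ ‖μ • a‖ + ‖b‖ := norm_add_le _ _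
          _ = μ * ‖a‖ + ‖b‖ := by rw [norm_smul, Real.norm_of_nonneg hμ0]
    _ ≤ _ := by nlinarith [div_nonneg (mul_nonneg hμ0 (sq_nonneg ((1 - μ) * ‖a‖ - ‖b‖))) hμ.le]

end Young

section Recursion

variable {Ω : Type*} [MeasurableSpace Ω] {P : Measure Ω}

/-- `x t` need not be measurable, so the recursion is run on an integrable majorant of it. -/
theorem integral_le_div_one_sub_of_le_mul_add {x v : ℕ → Ω → ℝ} {ρ b : ℝ}
    (hρ0 : 0 ≤ ρ) (hρ1 : ρ < 1) (hb : 0 ≤ b) (hx : ∀ t ω, 0 ≤ x t ω) (hx0 : ∀ ω, x 0 ω = 0)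
    (hv : ∀ t, Integrable (v t) P) (hvb : ∀ t, ∫ ω, v t ω ∂P ≤ b)
    (hstep : ∀ t ω, x (t + 1) ω ≤ ρ * x t ω + v t ω) (t : ℕ) :
    ∫ ω, x t ω ∂P ≤ b / (1 - ρ) := by
  have hρ : 0 < 1 - ρ := by linarith
  have majorant : ∀ t, ∃ u : Ω → ℝ, Integrable u P ∧ (∀ ω, x t ω ≤ u ω) ∧
      ∫ ω, u ω ∂P ≤ b / (1 - ρ) := by
    intro t
    induction t with
    | zero =>
      refine ⟨0, integrable_zero _ _ _, fun ω => (hx0 ω).le, ?_⟩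
      rw [integral_zero']
      positivity
    | succ t ih =>
      obtain ⟨u, hu, hxu, hub⟩ := ih
      refine ⟨fun ω => ρ * u ω + v t ω, (hu.const_mul ρ).add (hv t), fun ω => ?_, ?_⟩
      · nlinarith [hstep t ω, hxu ω]
      · rw [integral_add (hu.const_mul ρ) (hv t), integral_const_mul]
        calc ρ * ∫ ω, u ω ∂P + ∫ ω, v t ω ∂P ≤ ρ * (b / (1 - ρ)) + b := by
              gcongr
              exact hvb t
          _ = b / (1 - ρ) := by field_simp; ring
  obtain ⟨u, hu, hxu, hub⟩ := majorant t
  exact (integral_mono_of_nonneg (.of_forall (hx t)) hu (.of_forall hxu)).trans hub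

end Recursion

section SAEF

variable {Ω : Type*} [MeasurableSpace Ω] {P : Measure Ω}
  {E : Type*} [NormedAddCommGroup E] [NormedSpace ℝ E]

theorem memLp_of_momentum {μ : ℝ} {g m : ℕ → Ω → E} (hg : ∀ t, MemLp (g t) 2 P)
    (hm0 : ∀ ω, m 0 ω = 0) (hm : ∀ t ω, m (t + 1) ω = μ • m t ω + g t ω) (t : ℕ) :
    MemLp (m t) 2 P := by
  induction t with
  | zero => rw [funext hm0]; exact MemLp.zero'
  | succ t ih =>
    rw [show m (t + 1) = μ • m t + g t from funext (hm t)]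
    exact (ih.const_smul μ).add (hg t)

theorem integral_sq_norm_momentum_le {μ B : ℝ} (hμ0 : 0 ≤ μ) (hμ1 : μ < 1)
    {g m : ℕ → Ω → E} (hg : ∀ t, MemLp (g t) 2 P) (hgB : ∀ t, ∫ ω, ‖g t ω‖ ^ 2 ∂P ≤ B)
    (hm0 : ∀ ω, m 0 ω = 0) (hm : ∀ t ω, m (t + 1) ω = μ • m t ω + g t ω) (t : ℕ) :
    ∫ ω, ‖m t ω‖ ^ 2 ∂P ≤ B / (1 - μ) ^ 2 := by
  have hμ : 0 < 1 - μ := by linarith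
  have hB : 0 ≤ B := (integral_nonneg fun ω => by positivity).trans (hgB 0)
  have h := integral_le_div_one_sub_of_le_mul_add (P := P) (x := fun t ω => ‖m t ω‖ ^ 2)
    (v := fun t ω => ‖g t ω‖ ^ 2 / (1 - μ)) hμ0 hμ1 (div_nonneg hB hμ.le)
    (fun t ω => by positivity) (fun ω => by simp [hm0 ω])
    (fun t => ((hg t).integrable_norm_pow two_ne_zero).div_const _)
    (fun t => by rw [integral_div]; gcongr; exact hgB t)
    (fun t ω => by rw [hm t ω]; exact norm_smul_add_sq_le _ _ hμ0 hμ1) t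
  rwa [div_div, ← sq] at h

theorem integral_sq_norm_error_le {Co : E → E} {δ β D : ℝ} (hδ1 : δ < 1)
    (hCo : ∀ v, ‖Co v - v‖ ^ 2 ≤ (1 - δ) * ‖v‖ ^ 2) (hβ0 : 0 < β) (hβδ : β < δ / (1 - δ))
    {η : ℕ → ℝ} {m e : ℕ → Ω → E} (hm : ∀ t, MemLp (m (t + 1)) 2 P)
    (hD : ∀ t, η t ^ 2 * ∫ ω, ‖m (t + 1) ω‖ ^ 2 ∂P ≤ D) (he0 : ∀ ω, e 0 ω = 0)
    (he : ∀ t ω, e (t + 1) ω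
      = e t ω + η t • m (t + 1) ω - Co (e t ω + η t • m (t + 1) ω)) (t : ℕ) :
    ∫ ω, ‖e t ω‖ ^ 2 ∂P ≤ (1 - δ) * (1 + 1 / β) / (1 - (1 - δ) * (1 + β)) * D := by
  have hδ : 0 < 1 - δ := by linarith
  have hρ1 : (1 - δ) * (1 + β) < 1 := by
    rw [lt_div_iff₀ hδ] at hβδ
    linarith
  have hD0 : 0 ≤ D := (mul_nonneg (sq_nonneg _) (integral_nonneg fun ω => by positivity)).trans (hD 0)
  have step : ∀ t ω, ‖e (t + 1) ω‖ ^ 2 ≤ (1 - δ) * (1 + β) * ‖e t ω‖ ^ 2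
      + (1 - δ) * (1 + 1 / β) * (η t ^ 2 * ‖m (t + 1) ω‖ ^ 2) := by
    intro t ω
    rw [he t ω, norm_sub_rev]
    refine (hCo _).trans ?_
    have young := norm_add_sq_le_young (e t ω) (η t • m (t + 1) ω) hβ0
    rw [norm_smul, mul_pow, Real.norm_eq_abs, sq_abs] at young
    have := mul_le_mul_of_nonneg_left young hδ.le
    linarith
  have h := integral_le_div_one_sub_of_le_mul_add (P := P) (x := fun t ω => ‖e t ω‖ ^ 2)
    (v := fun t ω => (1 - δ) * (1 + 1 / β) * (η t ^ 2 * ‖m (t + 1) ω‖ ^ 2)) (by positivity) hρ1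
    (by positivity : 0 ≤ (1 - δ) * (1 + 1 / β) * D) (fun t ω => by positivity)
    (fun ω => by simp [he0 ω])
    (fun t => (((hm t).integrable_norm_pow two_ne_zero).const_mul _).const_mul _)
    (fun t => by rw [integral_const_mul, integral_const_mul]; gcongr; exact hD t) step t
  rwa [mul_div_right_comm] at h

end SAEF

/-- This choice of `β` minimises the constant. -/
theorem contraction_constant_at_inv_sqrt {δ : ℝ} (hδ0 : 0 < δ) (hδ1 : δ < 1) :
    let β := 1 / Real.sqrt (1 - δ) - 1
    0 < β ∧ β < δ / (1 - δ) ∧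
      (1 - δ) * (1 + 1 / β) / (1 - (1 - δ) * (1 + β)) = (1 - δ) / (1 - Real.sqrt (1 - δ)) ^ 2 := by
  intro β
  set x := Real.sqrt (1 - δ) with hx
  have hδ : 0 < 1 - δ := by linarith
  have hx0 : 0 < x := Real.sqrt_pos.2 hδ
  have hx2 : x ^ 2 = 1 - δ := Real.sq_sqrt hδ.le
  have hx1 : x < 1 := by nlinarith
  have hβ : β = (1 - x) / x := by simp only [β, ← hx]; field_simp
  have h1x : 1 - x ≠ 0 := by linarith
  refine ⟨by rw [hβ]; exact div_pos (by linarith) hx0, ?_, ?_⟩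
  · rw [hβ, div_lt_div_iff₀ hx0 hδ]
    nlinarith
  · have hinv : 1 + 1 / β = 1 / (1 - x) := by rw [hβ]; field_simp; ring
    have hρ : (1 - δ) * (1 + β) = x := by rw [hβ, ← hx2]; field_simp; ring
    rw [hinv, hρ]
    field_simp

theorem local_error_second_moment_bound_general
    {Ω : Type*} [MeasurableSpace Ω] (P : Measure Ω)
    {d K : ℕ}
    (μ M σ δ ηmax : ℝ) (hμ0 : 0 ≤ μ) (hμ1 : μ < 1)
    (hδ0 : 0 < δ) (hδ1 : δ < 1)
    (Co : EuclideanSpace ℝ (Fin d) → EuclideanSpace ℝ (Fin d))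
    (hCo : ∀ v, ‖Co v - v‖ ^ 2 ≤ (1 - δ) * ‖v‖ ^ 2)
    (η : ℕ → ℝ) (hη0 : ∀ t, 0 < η t) (hηmax : ∀ t, η t ≤ ηmax)
    (g m e : Fin K → ℕ → Ω → EuclideanSpace ℝ (Fin d))
    (hgL2 : ∀ k t, MemLp (g k t) 2 P)
    (hgbound : ∀ k t, ∫ ω, ‖g k t ω‖ ^ 2 ∂P ≤ M ^ 2 + σ ^ 2)
    (hm0 : ∀ k ω, m k 0 ω = 0) (he0 : ∀ k ω, e k 0 ω = 0)
    (hm : ∀ k t ω, m k (t + 1) ω = μ • m k t ω + g k t ω)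
    (Δ : Fin K → ℕ → Ω → EuclideanSpace ℝ (Fin d))
    (hΔ : ∀ k t ω, Δ k (t + 1) ω = e k t ω + η t • m k (t + 1) ω)
    (he : ∀ k t ω, e k (t + 1) ω = Δ k (t + 1) ω - Co (Δ k (t + 1) ω)) :
    (∀ β₁ : ℝ, 0 < β₁ → β₁ < δ / (1 - δ) → ∀ k t,
        ∫ ω, ‖e k (t + 1) ω‖ ^ 2 ∂P
          ≤ ((1 - δ) * (1 + 1 / β₁) / (1 - (1 - δ) * (1 + β₁)))
              * (ηmax ^ 2 * (M ^ 2 + σ ^ 2) / (1 - μ) ^ 2))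
    ∧ ∀ k t, ∫ ω, ‖e k (t + 1) ω‖ ^ 2 ∂P
        ≤ ((1 - δ) / (1 - Real.sqrt (1 - δ)) ^ 2)
            * (ηmax ^ 2 * (M ^ 2 + σ ^ 2) / (1 - μ) ^ 2) := by
  have hD : ∀ k t, η t ^ 2 * ∫ ω, ‖m k (t + 1) ω‖ ^ 2 ∂P
      ≤ ηmax ^ 2 * ((M ^ 2 + σ ^ 2) / (1 - μ) ^ 2) := fun k t => by
    gcongr
    · exact (hη0 t).le
    · exact hηmax t
    · exact integral_sq_norm_momentum_le hμ0 hμ1 (hgL2 k) (hgbound k) (hm0 k) (hm k) _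
  have bound : ∀ β₁ : ℝ, 0 < β₁ → β₁ < δ / (1 - δ) → ∀ k t,
      ∫ ω, ‖e k (t + 1) ω‖ ^ 2 ∂P ≤ ((1 - δ) * (1 + 1 / β₁) / (1 - (1 - δ) * (1 + β₁)))
        * (ηmax ^ 2 * (M ^ 2 + σ ^ 2) / (1 - μ) ^ 2) := fun β₁ hβ hβδ k t => by
    rw [mul_div_assoc (ηmax ^ 2)]
    exact integral_sq_norm_error_le hδ1 hCo hβ hβδ
      (fun t => memLp_of_momentum (hgL2 k) (hm0 k) (hm k) (t + 1)) (hD k) (he0 k)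
      (fun t ω => by rw [he, hΔ]) (t + 1)
  obtain ⟨hβ, hβδ, hconst⟩ := contraction_constant_at_inv_sqrt hδ0 hδ1
  exact ⟨bound, fun k t => hconst ▸ bound _ hβ hβδ k t⟩

/-- Bound on the local compression error of SAEF-SGD with momentum:
for every `β₁ ∈ (0, δ/(1−δ))` and every `t`,
`E‖e^k_{t+1}‖² ≤ [(1−δ)(1+1/β₁)/(1−(1−δ)(1+β₁))]·η_max²(M²+σ²)/(1−μ)²`,
and in particular (taking `β₁ = 1/√(1−δ) − 1`)
`E‖e^k_{t+1}‖² ≤ (1−δ)/(1−√(1−δ))²·η_max²(M²+σ²)/(1−μ)²`. -/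
theorem local_error_second_moment_bound
    {Ω : Type*} [MeasurableSpace Ω] (P : Measure Ω) [IsProbabilityMeasure P]
    {d K : ℕ} (hK : 1 ≤ K)
    (μ M σ δ ηmax : ℝ) (hμ0 : 0 ≤ μ) (hμ1 : μ < 1)
    (hM : 0 ≤ M) (hσ : 0 ≤ σ) (hδ0 : 0 < δ) (hδ1 : δ < 1)
    (Co : EuclideanSpace ℝ (Fin d) → EuclideanSpace ℝ (Fin d))
    (hCo : ∀ v, ‖Co v - v‖ ^ 2 ≤ (1 - δ) * ‖v‖ ^ 2)
    (η : ℕ → ℝ) (hη0 : ∀ t, 0 < η t) (hηmax : ∀ t, η t ≤ ηmax)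
    (g m e : Fin K → ℕ → Ω → EuclideanSpace ℝ (Fin d))
    (hgL2 : ∀ k t, MemLp (g k t) 2 P)
    (hgbound : ∀ k t, ∫ ω, ‖g k t ω‖ ^ 2 ∂P ≤ M ^ 2 + σ ^ 2)
    (hm0 : ∀ k ω, m k 0 ω = 0) (he0 : ∀ k ω, e k 0 ω = 0)
    (hm : ∀ k t ω, m k (t + 1) ω = μ • m k t ω + g k t ω)
    (Δ : Fin K → ℕ → Ω → EuclideanSpace ℝ (Fin d))
    (hΔ : ∀ k t ω, Δ k (t + 1) ω = e k t ω + η t • m k (t + 1) ω)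
    (he : ∀ k t ω, e k (t + 1) ω = Δ k (t + 1) ω - Co (Δ k (t + 1) ω)) :
    (∀ β₁ : ℝ, 0 < β₁ → β₁ < δ / (1 - δ) → ∀ k t,
        ∫ ω, ‖e k (t + 1) ω‖ ^ 2 ∂P
          ≤ ((1 - δ) * (1 + 1 / β₁) / (1 - (1 - δ) * (1 + β₁)))
              * (ηmax ^ 2 * (M ^ 2 + σ ^ 2) / (1 - μ) ^ 2))
    ∧ ∀ k t, ∫ ω, ‖e k (t + 1) ω‖ ^ 2 ∂P
        ≤ ((1 - δ) / (1 - Real.sqrt (1 - δ)) ^ 2)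
            * (ηmax ^ 2 * (M ^ 2 + σ ^ 2) / (1 - μ) ^ 2) :=
  local_error_second_moment_bound_general P μ M σ δ ηmax hμ0 hμ1 hδ0 hδ1 Co hCo η hη0 hηmax g m e
    hgL2 hgbound hm0 he0 hm Δ hΔ he
end
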